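/- arXiv:1211.0651 — 8 statements merged into one kernel-verified Lean document; each statement's English description precedes it below -/
import Mathlib

section
/- Let X and Y be jointly distributed finite random variables with Y ranging over a finite set 𝒴. Assume X is ε-close in statistical distance to some distribution with min-entropy k. Then for any ε' > 0, with probability at least 1 − ε' − ε/ε' over y ← Y, the conditional distribution X|Y=y is ε'-close to a distribution with min-entropy at least k − log|𝒴| − log(1/ε'). -/
/-!
Put `T = 2^(-k)` and `M = T |𝒴| / ε'`. As the marginal of `X` is `ε`-close to a distribution
bounded by `T`, its total mass above `T` is at most `ε`; since `t ↦ (t - T)⁺` is superadditive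
on `t ≥ 0`, the same holds for the joint weights `p(x, y)`. The `y` with `Pr[Y = y] < ε' / |𝒴|`
carry mass less than `ε'`. For the other `y` the cap `M Pr[Y = y]` is at least `T`, so the mass
of `p(·, y)` above it is at most its mass above `T`; when that is at most `ε' Pr[Y = y]`,
truncating at the cap and refilling the room below it yields the required distribution, and by
Markov's inequality the remaining `y` carry mass at most `ε / ε'`.
-/

open Finset

theorem posPart_sub_add_posPart_sub_le {a b c : ℝ} (ha : 0 ≤ a) (hb : 0 ≤ b) (hc : 0 ≤ c) :
    (a - c)⁺ + (b - c)⁺ ≤ (a + b - c)⁺ := by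
  rcases le_total a c with hac | hac <;> rcases le_total b c with hbc | hbc <;>
    simp only [posPart_eq_zero.mpr (sub_nonpos.mpr hac), posPart_eq_self.mpr (sub_nonneg.mpr hac),
      posPart_eq_zero.mpr (sub_nonpos.mpr hbc), posPart_eq_self.mpr (sub_nonneg.mpr hbc)] <;>
    linarith [le_posPart (a + b - c), posPart_nonneg (a + b - c)]

theorem sum_posPart_sub_le_posPart_sum_sub {ι : Type*} (s : Finset ι) {a : ι → ℝ}
    (ha : ∀ i ∈ s, 0 ≤ a i) {c : ℝ} (hc : 0 ≤ c) :
    ∑ i ∈ s, (a i - c)⁺ ≤ (∑ i ∈ s, a i - c)⁺ := by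
  classical
  induction s using Finset.induction_on with
  | empty => simp
  | insert i s hi ih =>
    rw [forall_mem_insert] at ha
    rw [sum_insert hi, sum_insert hi]
    calc (a i - c)⁺ + ∑ j ∈ s, (a j - c)⁺ ≤ (a i - c)⁺ + (∑ j ∈ s, a j - c)⁺ := by
          gcongr; exact ih ha.2
      _ ≤ (a i + ∑ j ∈ s, a j - c)⁺ :=
          posPart_sub_add_posPart_sub_le ha.1 (sum_nonneg ha.2) hc

theorem sum_posPart_sub_le_half_sum_abs_sub {ι : Type*} (s : Finset ι) {a q : ι → ℝ}
    (h : ∑ i ∈ s, a i = ∑ i ∈ s, q i) {T : ℝ} (hqT : ∀ i ∈ s, q i ≤ T) :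
    ∑ i ∈ s, (a i - T)⁺ ≤ (1/2) * ∑ i ∈ s, |a i - q i| := by
  have hsum : ∑ i ∈ s, (a i - q i) = 0 := by rw [sum_sub_distrib, h, sub_self]
  calc ∑ i ∈ s, (a i - T)⁺
      ≤ ∑ i ∈ s, (a i - q i)⁺ := sum_le_sum fun i hi => posPart_mono (by linarith [hqT i hi])
    _ = (1/2) * (∑ i ∈ s, ((a i - q i)⁺ + (a i - q i)⁻) +
          ∑ i ∈ s, ((a i - q i)⁺ - (a i - q i)⁻)) := by
        rw [← sum_add_distrib, mul_sum]; congr 1 with i; ring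
    _ = (1/2) * ∑ i ∈ s, |a i - q i| := by
        simp only [posPart_add_negPart, posPart_sub_negPart, hsum, add_zero]

theorem exists_le_const_of_sum_le_card_mul {ι : Type*} [Fintype ι] {a : ι → ℝ}
    (ha : ∀ i, 0 ≤ a i) {c : ℝ} (hc : 0 ≤ c) (hac : ∑ i, a i ≤ Fintype.card ι * c) :
    ∃ b : ι → ℝ, (∀ i, 0 ≤ b i) ∧ (∀ i, b i ≤ c) ∧ ∑ i, b i = ∑ i, a i ∧
      ∑ i, |a i - b i| ≤ 2 * ∑ i, (a i - c)⁺ := by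
  set m : ι → ℝ := fun i => min (a i) c
  set e := ∑ i, (a i - c)⁺
  set D := ∑ i, (c - m i)
  have ha_sub_m : ∀ i, a i - m i = (a i - c)⁺ := fun i => by
    rw [show m i = a i - (a i - c)⁺ from inf_eq_sub_posPart_sub _ _]; ring
  have hm_le : ∀ i, m i ≤ c := fun i => min_le_right _ _
  have hsum_a : ∑ i, a i = ∑ i, m i + e := by
    rw [← sum_add_distrib]; exact sum_congr rfl fun i _ => by linarith [ha_sub_m i]
  have he0 : 0 ≤ e := sum_nonneg fun i _ => posPart_nonneg _
  have heD : e ≤ D := by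
    have : D = Fintype.card ι * c - ∑ i, m i := by simp [D, sum_sub_distrib]
    linarith
  -- the room `D` below the cap is filled proportionally with the truncated mass `e`
  set t := e / D
  have ht0 : 0 ≤ t := div_nonneg he0 (he0.trans heD)
  have ht1 : t ≤ 1 := div_le_one_of_le₀ heD (he0.trans heD)
  have htD : t * D = e := by
    rcases eq_or_ne D 0 with hD | hD
    · rw [hD, mul_zero]; linarith
    · exact div_mul_cancel₀ e hD
  refine ⟨fun i => m i + t * (c - m i), fun i => ?_, fun i => ?_, ?_, ?_⟩
  · exact add_nonneg (le_min (ha i) hc) (mul_nonneg ht0 (sub_nonneg.mpr (hm_le i)))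
  · nlinarith [hm_le i]
  · rw [sum_add_distrib, ← mul_sum, htD, hsum_a]
  · calc ∑ i, |a i - (m i + t * (c - m i))|
        ≤ ∑ i, ((a i - c)⁺ + t * (c - m i)) := by
          refine sum_le_sum fun i _ => abs_le.mpr ⟨?_, ?_⟩ <;>
            nlinarith [ha_sub_m i, posPart_nonneg (a i - c), hm_le i]
      _ = 2 * e := by rw [sum_add_distrib, ← mul_sum, htD]; ring

theorem exists_normalized_le_of_sum_posPart_sub_le {α : Type*} [Fintype α] {a : α → ℝ}
    (ha : ∀ x, 0 ≤ a x) (hW : 0 < ∑ x, a x) {M : ℝ} (hM : 1 ≤ Fintype.card α * M)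
    {δ : ℝ} (hδ : ∑ x, (a x - M * ∑ x', a x')⁺ ≤ δ * ∑ x', a x') :
    ∃ q' : α → ℝ, (∀ x, 0 ≤ q' x) ∧ (∑ x, q' x = 1) ∧ (∀ x, q' x ≤ M) ∧
      (1/2) * ∑ x, |a x - q' x * (∑ x' : α, a x')| ≤ δ * (∑ x' : α, a x') := by
  set W := ∑ x, a x
  have hM0 : 0 < M := pos_of_mul_pos_right (one_pos.trans_le hM) (Nat.cast_nonneg _)
  obtain ⟨b, hb0, hbM, hbW, hab⟩ := exists_le_const_of_sum_le_card_mul ha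
    (mul_nonneg hM0.le hW.le) (by nlinarith)
  refine ⟨fun x => b x / W, fun x => div_nonneg (hb0 x) hW.le, ?_,
    fun x => (div_le_iff₀ hW).mpr (hbM x), ?_⟩
  · rw [← sum_div, hbW, div_self hW.ne']
  · simp only [div_mul_cancel₀ _ hW.ne']
    linarith

theorem sum_le_of_not_exists_normalized_le {α : Type*} [Fintype α] {a : α → ℝ}
    (ha : ∀ x, 0 ≤ a x) {M : ℝ} (hM : 1 ≤ Fintype.card α * M) {T L δ : ℝ} (hL : 0 < L)
    (hTM : T ≤ M * L) (hδ : 0 < δ)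
    (h : ¬ ∃ q' : α → ℝ, (∀ x, 0 ≤ q' x) ∧ (∑ x, q' x = 1) ∧ (∀ x, q' x ≤ M) ∧
      (1/2) * ∑ x, |a x - q' x * (∑ x' : α, a x')| ≤ δ * (∑ x' : α, a x')) :
    ∑ x, a x ≤ L + (∑ x, (a x - T)⁺) / δ := by
  by_contra! hlt
  apply h
  have hE0 : 0 ≤ (∑ x, (a x - T)⁺) / δ :=
    div_nonneg (sum_nonneg fun x _ => posPart_nonneg _) hδ.le
  have hM0 : 0 < M := pos_of_mul_pos_right (one_pos.trans_le hM) (Nat.cast_nonneg _)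
  have hTW : T ≤ M * ∑ x, a x := hTM.trans (by gcongr; linarith)
  refine exists_normalized_le_of_sum_posPart_sub_le ha (by linarith) hM ?_
  calc ∑ x, (a x - M * ∑ x', a x')⁺ ≤ ∑ x, (a x - T)⁺ :=
        sum_le_sum fun x _ => posPart_mono (by linarith)
    _ ≤ δ * ∑ x', a x' := (div_le_iff₀' hδ).mp (by linarith)

theorem sum_sum_posPart_sub_le_half_sum_abs_sub {α β : Type*} [Fintype α] [Fintype β]
    {a : α → β → ℝ} (ha : ∀ x y, 0 ≤ a x y) {q : α → ℝ} (hq : ∑ x, q x = ∑ x, ∑ y, a x y)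
    {T : ℝ} (hT : 0 ≤ T) (hqT : ∀ x, q x ≤ T) :
    ∑ y, ∑ x, (a x y - T)⁺ ≤ (1/2) * ∑ x, |∑ y, a x y - q x| :=
  calc ∑ y, ∑ x, (a x y - T)⁺ = ∑ x, ∑ y, (a x y - T)⁺ := sum_comm
    _ ≤ ∑ x, (∑ y, a x y - T)⁺ :=
        sum_le_sum fun x _ => sum_posPart_sub_le_posPart_sum_sub _ (fun y _ => ha x y) hT
    _ ≤ (1/2) * ∑ x, |∑ y, a x y - q x| :=
        sum_posPart_sub_le_half_sum_abs_sub _ hq.symm fun x _ => hqT x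

theorem one_sub_le_sum_filter_of_not_le {β : Type*} [Fintype β] {P : β → Prop}
    [DecidablePred P] {W E : β → ℝ} (hW1 : ∑ y, W y = 1) (hE0 : ∀ y, 0 ≤ E y) {L δ ε : ℝ}
    (hL : 0 ≤ L) (hδ : 0 < δ) (hE : ∑ y, E y ≤ ε) (hbad : ∀ y, ¬ P y → W y ≤ L + E y / δ) :
    1 - Fintype.card β * L - ε / δ ≤ ∑ y ∈ univ.filter P, W y := by
  have hbad_sum : ∑ y ∈ univ.filter (fun y => ¬ P y), W y ≤ ∑ y, (L + E y / δ) :=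
    calc ∑ y ∈ univ.filter (fun y => ¬ P y), W y
        ≤ ∑ y ∈ univ.filter (fun y => ¬ P y), (L + E y / δ) :=
          sum_le_sum fun y hy => hbad y (mem_filter.mp hy).2
      _ ≤ ∑ y, (L + E y / δ) :=
          sum_le_sum_of_subset_of_nonneg (filter_subset _ _) fun y _ _ =>
            add_nonneg hL (div_nonneg (hE0 y) hδ.le)
  rw [sum_add_distrib, sum_const, card_univ, nsmul_eq_mul, ← sum_div] at hbad_sum
  rw [← sum_filter_add_sum_filter_not univ P W] at hW1
  linarith [div_le_div_of_nonneg_right hE hδ.le]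

open scoped Classical in
theorem le_sum_filter_conditional_close_to_bounded {α β : Type*} [Fintype α] [Fintype β]
    [Nonempty β] {p : α × β → ℝ} (hp0 : ∀ z, 0 ≤ p z) (hp1 : ∑ z, p z = 1)
    {q : α → ℝ} (hq1 : ∑ x, q x = 1) {T ε : ℝ} (hqT : ∀ x, q x ≤ T)
    (hqε : (1/2) * ∑ x, |(∑ y, p (x, y)) - q x| ≤ ε) {ε' : ℝ} (hε' : 0 < ε') (hε'1 : ε' ≤ 1) :
    1 - ε' - ε / ε' ≤ ∑ y ∈ univ.filter (fun y : β => ∃ q' : α → ℝ,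
        (∀ x, 0 ≤ q' x) ∧ (∑ x, q' x = 1) ∧ (∀ x, q' x ≤ T * Fintype.card β / ε') ∧
        (1/2) * ∑ x, |p (x, y) - q' x * (∑ x' : α, p (x', y))| ≤ ε' * (∑ x' : α, p (x', y))),
      ∑ x, p (x, y) := by
  set M := T * Fintype.card β / ε'
  have hp1' : ∑ x, ∑ y, p (x, y) = 1 := by rw [← Fintype.sum_prod_type', hp1]
  have hβ : (1 : ℝ) ≤ Fintype.card β := by exact_mod_cast Fintype.card_pos
  have hTα : 1 ≤ Fintype.card α * T :=
    calc 1 = ∑ x, q x := hq1.symm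
      _ ≤ ∑ _x : α, T := sum_le_sum fun x _ => hqT x
      _ = Fintype.card α * T := by rw [sum_const, card_univ, nsmul_eq_mul]
  have hT0 : 0 < T := pos_of_mul_pos_right (one_pos.trans_le hTα) (Nat.cast_nonneg _)
  have hM : 1 ≤ Fintype.card α * M := by
    rw [show Fintype.card α * M = Fintype.card α * T * Fintype.card β / ε' by ring,
      le_div_iff₀ hε']
    nlinarith
  have hE : ∑ y, ∑ x, (p (x, y) - T)⁺ ≤ ε :=
    (sum_sum_posPart_sub_le_half_sum_abs_sub (a := fun x y => p (x, y)) (fun x y => hp0 _)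
      (by rw [hq1, hp1']) hT0.le hqT).trans hqε
  have key := one_sub_le_sum_filter_of_not_le (L := ε' / Fintype.card β)
    (by rw [sum_comm, hp1']) (fun y => sum_nonneg fun x _ => posPart_nonneg _) (by positivity)
    hε' hE
    fun y hy => sum_le_of_not_exists_normalized_le (fun x => hp0 (x, y)) hM (by positivity)
      (le_of_eq (by simp only [M]; field_simp)) hε' hy
  rwa [mul_div_cancel₀ _ (by positivity)] at key

open scoped Classical in
/-- If `(X, Y)` has joint distribution `p` and `X` (the first marginal) is
`ε`-close to some distribution with min-entropy `k`, then for any `ε' > 0`, with probability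
at least `1 - ε' - ε/ε'` over `y ← Y`, the conditional distribution `X | Y = y` is
`ε'`-close to a distribution with min-entropy at least `k - log₂|𝒴| - log₂(1/ε')`.
(All statements about the conditional distribution are expressed multiplicatively,
scaled by `Pr[Y = y]`.) -/
theorem conditional_min_entropy_loss_approx
    {α β : Type*} [Fintype α] [Fintype β]
    (p : α × β → ℝ) (hp0 : ∀ z, 0 ≤ p z) (hp1 : ∑ z, p z = 1)
    (k ε : ℝ)
    (hclose : ∃ q : α → ℝ, (∀ x, 0 ≤ q x) ∧ (∑ x, q x = 1) ∧
      (∀ x, q x ≤ (2:ℝ) ^ (-k)) ∧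
      (1/2) * ∑ x, |(∑ y, p (x, y)) - q x| ≤ ε)
    (ε' : ℝ) (hε' : 0 < ε') :
    ∑ y ∈ univ.filter (fun y : β => ∃ q' : α → ℝ,
        (∀ x, 0 ≤ q' x) ∧ (∑ x, q' x = 1) ∧
        (∀ x, q' x ≤ (2:ℝ) ^ (-(k - Real.logb 2 (Fintype.card β) - Real.logb 2 (1/ε')))) ∧
        (1/2) * ∑ x, |p (x, y) - q' x * (∑ x' : α, p (x', y))| ≤ ε' * (∑ x' : α, p (x', y))),
      (∑ x : α, p (x, y)) ≥ 1 - ε' - ε/ε' := by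
  obtain ⟨q, -, hq1, hqT, hqε⟩ := hclose
  rcases le_or_gt ε' 1 with hε'1 | hε'1
  · obtain ⟨⟨-, y⟩, -⟩ := nonempty_of_sum_ne_zero (hp1 ▸ one_ne_zero : ∑ z, p z ≠ 0)
    have : Nonempty β := ⟨y⟩
    have hβ : (0 : ℝ) < Fintype.card β := by exact_mod_cast Fintype.card_pos
    have hcap : (2:ℝ) ^ (-(k - Real.logb 2 (Fintype.card β) - Real.logb 2 (1/ε')))
        = 2 ^ (-k) * Fintype.card β / ε' := by
      rw [show -(k - Real.logb 2 (Fintype.card β) - Real.logb 2 (1/ε'))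
          = -k + Real.logb 2 (Fintype.card β) + Real.logb 2 (1/ε') by ring,
        Real.rpow_add two_pos, Real.rpow_add two_pos, Real.rpow_logb two_pos (by norm_num) hβ,
        Real.rpow_logb two_pos (by norm_num) (by positivity)]
      ring
    simp only [hcap]
    exact le_sum_filter_conditional_close_to_bounded hp0 hp1 hq1 hqT hqε hε' hε'1
  · have hε : 0 ≤ ε := le_trans (by positivity) hqε
    calc 1 - ε' - ε / ε' ≤ 0 := by linarith [div_nonneg hε hε'.le]
      _ ≤ _ := sum_nonneg fun y _ => sum_nonneg fun x _ => hp0 _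
end

section
/- For any jointly distributed finite random variables A and B, if B takes at most 2^ℓ possible values, then the average conditional min-entropy satisfies H̃∞(A|B) ≥ H∞(A) − ℓ. -/
open Finset

/-- If `(A, B)` has joint distribution `p`, `H∞(A) ≥ k` (every marginal
probability of `A` is at most `2^(-k)`), and `B` takes at most `2^ℓ` values, then the
average conditional min-entropy satisfies `H̃∞(A|B) ≥ k - ℓ`, where
`H̃∞(A|B) = -log₂ (∑_b max_a Pr[A = a, B = b])`. -/
theorem avg_cond_min_entropy_chain_rule
    {α β : Type*} [Fintype α] [Fintype β] [Nonempty α]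
    (p : α × β → ℝ) (hp0 : ∀ z, 0 ≤ p z) (hp1 : ∑ z, p z = 1)
    (k : ℝ) (hk : ∀ a, ∑ b, p (a, b) ≤ (2:ℝ) ^ (-k))
    (ℓ : ℝ) (hβ : (Fintype.card β : ℝ) ≤ (2:ℝ) ^ ℓ) :
    - Real.logb 2 (∑ b : β, univ.sup' univ_nonempty (fun a : α => p (a, b))) ≥ k - ℓ := by
  set S := ∑ b : β, univ.sup' univ_nonempty (fun a : α => p (a, b)) with hS
  -- each summand bounded by 2^(-k)
  have hterm : ∀ b : β, univ.sup' univ_nonempty (fun a : α => p (a, b)) ≤ (2:ℝ) ^ (-k) := by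
    intro b
    apply Finset.sup'_le
    intro a _
    calc p (a, b) ≤ ∑ b', p (a, b') :=
          Finset.single_le_sum (fun b' _ => hp0 (a, b')) (mem_univ b)
      _ ≤ (2:ℝ) ^ (-k) := hk a
  have hSle : S ≤ (Fintype.card β : ℝ) * (2:ℝ) ^ (-k) := by
    rw [hS]
    calc ∑ b : β, univ.sup' univ_nonempty (fun a : α => p (a, b))
        ≤ ∑ _b : β, (2:ℝ) ^ (-k) := Finset.sum_le_sum (fun b _ => hterm b)
      _ = (Fintype.card β : ℝ) * (2:ℝ) ^ (-k) := by
          rw [Finset.sum_const, Finset.card_univ, nsmul_eq_mul]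
  have h2k : (0:ℝ) < (2:ℝ) ^ (-k) := Real.rpow_pos_of_pos two_pos _
  have hS2 : S ≤ (2:ℝ) ^ (ℓ - k) := by
    calc S ≤ (Fintype.card β : ℝ) * (2:ℝ) ^ (-k) := hSle
      _ ≤ (2:ℝ) ^ ℓ * (2:ℝ) ^ (-k) := by
          exact mul_le_mul_of_nonneg_right hβ h2k.le
      _ = (2:ℝ) ^ (ℓ - k) := by
          rw [← Real.rpow_add two_pos]; ring_nf
  -- positivity of S
  have hSpos : (0:ℝ) < S := by
    have hsum : ∑ a : α, ∑ b : β, p (a, b) = 1 := by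
      rw [← hp1, ← Fintype.sum_prod_type]
    obtain ⟨a0, _, ha0⟩ : ∃ a ∈ (univ : Finset α), 0 < ∑ b : β, p (a, b) := by
      by_contra h
      push_neg at h
      have : ∑ a : α, ∑ b : β, p (a, b) ≤ 0 :=
        Finset.sum_nonpos (fun a ha => h a ha)
      linarith
    have : ∑ b : β, p (a0, b) ≤ S := by
      rw [hS]
      exact Finset.sum_le_sum (fun b _ =>
        Finset.le_sup' (fun a : α => p (a, b)) (mem_univ a0))
    linarith
  have hlog : Real.logb 2 S ≤ ℓ - k := by
    calc Real.logb 2 S ≤ Real.logb 2 ((2:ℝ) ^ (ℓ - k)) :=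
        (Real.logb_le_logb one_lt_two hSpos (Real.rpow_pos_of_pos two_pos _)).mpr hS2
      _ = ℓ - k := Real.logb_rpow two_pos (by norm_num)
  linarith
end

section
/- For any jointly distributed finite random variables X and W and any s > 0, with probability at least 1 − 2^{−s} over w ← W, the conditional min-entropy satisfies H∞(X | W=w) ≥ H̃∞(X|W) − s. -/
open Finset

open scoped Classical in
/-- For jointly distributed `(X, W)` with joint distribution `p` and any
`s > 0`, with probability at least `1 - 2^(-s)` over `w ← W`, the conditional min-entropy
satisfies `H∞(X | W = w) ≥ H̃∞(X|W) - s`.  Here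
`2^(-H̃∞(X|W)) = ∑_{w'} max_x Pr[X = x, W = w']`, and the conclusion for each good `w`
is stated multiplicatively:
`Pr[X = x, W = w] ≤ 2^s · 2^(-H̃∞(X|W)) · Pr[W = w]` for all `x`. -/
theorem avg_cond_min_entropy_to_worst_case
    {α β : Type*} [Fintype α] [Fintype β] [Nonempty α]
    (p : α × β → ℝ) (hp0 : ∀ z, 0 ≤ p z) (hp1 : ∑ z, p z = 1)
    (s : ℝ) (hs : 0 < s) :
    ∑ w ∈ univ.filter (fun w : β => ∀ x : α,
        p (x, w) ≤ (2:ℝ) ^ s * (∑ w' : β, univ.sup' univ_nonempty (fun x' : α => p (x', w')))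
          * (∑ x' : α, p (x', w))),
      (∑ x : α, p (x, w)) ≥ 1 - (2:ℝ) ^ (-s) := by
  classical
  set M : β → ℝ := fun w => univ.sup' univ_nonempty (fun x' : α => p (x', w)) with hM
  set A : ℝ := ∑ w' : β, M w' with hA
  have hpw : ∀ x w, p (x, w) ≤ M w := fun x w => le_sup' (fun x' : α => p (x', w)) (mem_univ x)
  have hMnn : ∀ w, 0 ≤ M w := fun w =>
    le_trans (hp0 (Classical.arbitrary α, w)) (hpw _ w)
  have hsumw : ∑ w : β, ∑ x : α, p (x, w) = 1 := by
    rw [← hp1, Fintype.sum_prod_type]; exact Finset.sum_comm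
  have hApos : 0 < A := by
    by_contra h
    push_neg at h
    have hA0 : A = 0 := le_antisymm h (Finset.sum_nonneg fun w _ => hMnn w)
    have hM0 : ∀ w ∈ (univ : Finset β), M w = 0 :=
      (Finset.sum_eq_zero_iff_of_nonneg fun w _ => hMnn w).mp hA0
    have : (1:ℝ) = 0 := by
      rw [← hsumw]
      exact Finset.sum_eq_zero fun w _ => Finset.sum_eq_zero fun x _ =>
        le_antisymm (le_trans (hpw x w) (le_of_eq (hM0 w (mem_univ w)))) (hp0 _)
    norm_num at this
  have h2s : (0:ℝ) < (2:ℝ) ^ s := Real.rpow_pos_of_pos (by norm_num) s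
  set G := univ.filter (fun w : β => ∀ x : α,
      p (x, w) ≤ (2:ℝ) ^ s * A * (∑ x' : α, p (x', w))) with hG
  have hbad : ∀ w ∈ univ \ G, (∑ x : α, p (x, w)) ≤ M w / ((2:ℝ) ^ s * A) := by
    intro w hw
    rw [Finset.mem_sdiff, hG, Finset.mem_filter] at hw
    push_neg at hw
    obtain ⟨x, hx⟩ := hw.2 hw.1
    have hlt : (2:ℝ) ^ s * A * (∑ x' : α, p (x', w)) < M w :=
      lt_of_lt_of_le hx (hpw x w)
    rw [le_div_iff₀ (by positivity)]
    linarith [hlt]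
  have hbadsum : ∑ w ∈ univ \ G, (∑ x : α, p (x, w)) ≤ (2:ℝ) ^ (-s) := by
    calc ∑ w ∈ univ \ G, (∑ x : α, p (x, w))
        ≤ ∑ w ∈ univ \ G, M w / ((2:ℝ) ^ s * A) := Finset.sum_le_sum hbad
      _ ≤ ∑ w : β, M w / ((2:ℝ) ^ s * A) := by
          apply Finset.sum_le_sum_of_subset_of_nonneg (Finset.sdiff_subset)
          intro w _ _; exact div_nonneg (hMnn w) (by positivity)
      _ = A / ((2:ℝ) ^ s * A) := by rw [← Finset.sum_div]
      _ = (2:ℝ) ^ (-s) := by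
          rw [Real.rpow_neg (by norm_num)]
          field_simp
  have hsplit : ∑ w ∈ G, (∑ x : α, p (x, w)) + ∑ w ∈ univ \ G, (∑ x : α, p (x, w)) = 1 := by
    rw [add_comm, Finset.sum_sdiff (Finset.subset_univ G), hsumw]
  linarith
end

section
/- Define f: {0,1}^m → 𝒫({1,...,4m}) by f(b₁,...,b_m) = {4i−3+b_i, 4i−b_i : i = 1,...,m}. Then for every μ, |f(μ)| = 2m, and for every pair μ ≠ μ' in {0,1}^m, there exists an integer j such that |f(μ)^{≥j}| > |f(μ')^{≥j}|, where S^{≥j} denotes {s ∈ S : s ≥ j}. That is, the collection {f(μ) : μ ∈ {0,1}^m} is pairwise top-heavy. -/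
open Finset

/-- The map `f` from `m`-bit strings to subsets of `{1, ..., 4m}`: bit `bᵢ` (for the `i`-th
block, `i = 1, ..., m`) selects `{4i-3, 4i}` if `bᵢ = 0` and `{4i-2, 4i-1}` if `bᵢ = 1`,
i.e. `f(b₁,...,b_m) = {4i-3+bᵢ, 4i-bᵢ : i = 1,...,m}`.  (Indices `i : Fin m` are
0-based, so block `i` contributes `4i+1+bᵢ` and `4i+4-bᵢ`.) -/
def laSet (m : ℕ) (μ : Fin m → Bool) : Finset ℕ :=
  (Finset.univ : Finset (Fin m)).biUnion fun i =>
    {4 * (i : ℕ) + 1 + (if μ i then 1 else 0), 4 * (i : ℕ) + 4 - (if μ i then 1 else 0)}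

/-- A single block of `laSet`. -/
def blk (b : Bool) (i : ℕ) : Finset ℕ :=
  {4 * i + 1 + (if b then 1 else 0), 4 * i + 4 - (if b then 1 else 0)}

lemma mem_blk {b : Bool} {i x : ℕ} (hx : x ∈ blk b i) : 4*i+1 ≤ x ∧ x ≤ 4*i+4 := by
  simp [blk] at hx
  rcases hx with h | h <;> cases b <;> simp at h <;> omega

lemma card_blk (b : Bool) (i : ℕ) : (blk b i).card = 2 := by
  rw [blk, Finset.card_pair]
  cases b <;> simp

lemma blk_disj {b b' : Bool} {i j : ℕ} (h : i ≠ j) : Disjoint (blk b i) (blk b' j) := by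
  rw [Finset.disjoint_left]
  intro a ha hb
  have h1 := mem_blk ha
  have h2 := mem_blk hb
  omega

lemma filter_blk_all {j : ℕ} (b : Bool) (i : ℕ) (h : j ≤ 4*i+1) :
    ((blk b i).filter (fun s => j ≤ s)).card = 2 := by
  rw [Finset.filter_true_of_mem, card_blk]
  intro x hx
  have := mem_blk hx
  omega

lemma filter_blk_none {j : ℕ} (b : Bool) (i : ℕ) (h : 4*i+4 < j) :
    ((blk b i).filter (fun s => j ≤ s)).card = 0 := by
  rw [Finset.filter_false_of_mem]
  · simp
  · intro x hx
    have := mem_blk hx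
    omega

lemma filter_false_top (i : ℕ) :
    ((blk false i).filter (fun s => 4*i+4 ≤ s)).card = 1 := by
  simp [blk, Finset.filter_insert, Finset.filter_singleton]

lemma filter_true_top (i : ℕ) :
    ((blk true i).filter (fun s => 4*i+4 ≤ s)).card = 0 := by
  simp [blk, Finset.filter_insert, Finset.filter_singleton]

lemma filter_true_mid (i : ℕ) :
    ((blk true i).filter (fun s => 4*i+2 ≤ s)).card = 2 := by
  simp [blk, Finset.filter_insert, Finset.filter_singleton]

lemma filter_false_mid (i : ℕ) :
    ((blk false i).filter (fun s => 4*i+2 ≤ s)).card = 1 := by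
  simp [blk, Finset.filter_insert, Finset.filter_singleton]

lemma laSet_eq (m : ℕ) (μ : Fin m → Bool) :
    laSet m μ = (Finset.univ : Finset (Fin m)).biUnion fun i => blk (μ i) (i : ℕ) := rfl

lemma laSet_filter_card (m : ℕ) (μ : Fin m → Bool) (j : ℕ) :
    ((laSet m μ).filter (fun s => j ≤ s)).card
      = ∑ i : Fin m, ((blk (μ i) (i : ℕ)).filter (fun s => j ≤ s)).card := by
  rw [laSet_eq, Finset.filter_biUnion, Finset.card_biUnion]
  intro a _ b _ hab
  exact Finset.disjoint_filter_filter (blk_disj (fun h => hab (Fin.val_injective h)))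

/-- every set `f(μ)` is a subset of `{1,...,4m}` of size exactly `2m`, and
the collection `{f(μ) : μ ∈ {0,1}^m}` is pairwise top-heavy: for all `μ ≠ μ'` there is
an integer `j` with `|f(μ)^{≥j}| > |f(μ')^{≥j}|`. -/
theorem laSet_card_and_pairwise_top_heavy (m : ℕ) :
    (∀ μ : Fin m → Bool, laSet m μ ⊆ Finset.Icc 1 (4*m) ∧ (laSet m μ).card = 2*m) ∧
    (∀ μ μ' : Fin m → Bool, μ ≠ μ' → ∃ j : ℕ,
      ((laSet m μ).filter (fun s => j ≤ s)).card >
        ((laSet m μ').filter (fun s => j ≤ s)).card) := by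
  constructor
  · intro μ
    constructor
    · intro x hx
      rw [laSet_eq, Finset.mem_biUnion] at hx
      obtain ⟨i, -, hx⟩ := hx
      have h1 := mem_blk hx
      have h2 := i.isLt
      simp only [Finset.mem_Icc]
      omega
    · rw [laSet_eq, Finset.card_biUnion]
      · simp [card_blk, Finset.card_univ, mul_comm]
      · intro a _ b _ hab
        exact blk_disj (fun h => hab (Fin.val_injective h))
  · intro μ μ' hne
    obtain ⟨i, hi⟩ := Function.ne_iff.mp hne
    have key : ∀ j : ℕ,
        ((blk (μ' i) (i : ℕ)).filter (fun s => j ≤ s)).card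
          < ((blk (μ i) (i : ℕ)).filter (fun s => j ≤ s)).card →
        (∀ k : Fin m, k ≠ i →
          ((blk (μ' k) (k : ℕ)).filter (fun s => j ≤ s)).card
            = ((blk (μ k) (k : ℕ)).filter (fun s => j ≤ s)).card) →
        ((laSet m μ).filter (fun s => j ≤ s)).card >
          ((laSet m μ').filter (fun s => j ≤ s)).card := by
      intro j hlt heq
      rw [laSet_filter_card, laSet_filter_card]
      apply Finset.sum_lt_sum
      · intro k _
        rcases eq_or_ne k i with rfl | hk
        · exact hlt.le
        · exact (heq k hk).le
      · exact ⟨i, Finset.mem_univ i, hlt⟩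
    have hother : ∀ (j : ℕ), (j ≤ 4*(i:ℕ)+4) → (4*(i:ℕ)+2 ≤ j) → ∀ k : Fin m, k ≠ i →
        ((blk (μ' k) (k : ℕ)).filter (fun s => j ≤ s)).card
          = ((blk (μ k) (k : ℕ)).filter (fun s => j ≤ s)).card := by
      intro j hj1 hj2 k hk
      have hkv : (k : ℕ) ≠ (i : ℕ) := fun h => hk (Fin.val_injective h)
      rcases lt_or_gt_of_ne hkv with h | h
      · rw [filter_blk_none _ _ (by omega), filter_blk_none _ _ (by omega)]
      · rw [filter_blk_all _ _ (by omega), filter_blk_all _ _ (by omega)]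
    rcases hμ : μ i with _ | _ <;> rcases hμ' : μ' i with _ | _
    · exact absurd (hμ.trans hμ'.symm) hi
    · refine ⟨4*(i:ℕ)+4, key _ ?_ (hother _ (by omega) (by omega))⟩
      rw [hμ, hμ', filter_true_top, filter_false_top]
      omega
    · refine ⟨4*(i:ℕ)+2, key _ ?_ (hother _ (by omega) (by omega))⟩
      rw [hμ, hμ', filter_false_mid, filter_true_mid]
      omega
    · exact absurd (hμ.trans hμ'.symm) hi
end

section
/- Let events H₁, H₂, ..., H_q be given on a probability space, and let E_i = H₁ ∩ ... ∩ H_i (with E₀ the whole space). Suppose that for every i with 0 ≤ i ≤ q−1, whenever Pr[E_i] > 2^{−s}, we have Pr[H_{i+1} | E_i] < 2^{−ℓ}. Then Pr[E_q] ≤ max(2^{−s}, 2^{−qℓ}). -/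
open MeasureTheory

/-- let `H₁, ..., H_q` be events on a probability space and
`E_i = H₁ ∩ ⋯ ∩ H_i` (with `E₀` the whole space).  If for every `0 ≤ i ≤ q-1`,
whenever `Pr[E_i] > 2^(-s)` we have `Pr[H_{i+1} | E_i] < 2^(-ℓ)`
(stated as `Pr[E_i ∩ H_{i+1}] < 2^(-ℓ) · Pr[E_i]`), then
`Pr[E_q] ≤ max (2^(-s)) (2^(-(q·ℓ)))`. -/
theorem successive_challenges_bound
    {Ω : Type*} [MeasurableSpace Ω] (μ : Measure Ω) [IsProbabilityMeasure μ]
    (q : ℕ) (H : ℕ → Set Ω) (s ℓ : ℝ) (hs : 0 < s) (hℓ : 0 < ℓ)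
    (E : ℕ → Set Ω) (hE : ∀ i, E i = ⋂ j ∈ Finset.Icc 1 i, H j)
    (hcond : ∀ i < q, (μ (E i)).toReal > (2:ℝ) ^ (-s) →
      (μ (E i ∩ H (i+1))).toReal < (2:ℝ) ^ (-ℓ) * (μ (E i)).toReal) :
    (μ (E q)).toReal ≤ max ((2:ℝ) ^ (-s)) ((2:ℝ) ^ (-((q : ℝ) * ℓ))) := by
  have key : ∀ i, i ≤ q → (μ (E i)).toReal ≤ max ((2:ℝ) ^ (-s)) ((2:ℝ) ^ (-((i : ℝ) * ℓ))) := by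
    intro i
    induction i with
    | zero =>
      intro _
      have h0 : E 0 = Set.univ := by
        rw [hE 0]
        simp
      rw [h0]
      simp
    | succ n ih =>
      intro hq
      have hn : n ≤ q := by omega
      have ihn := ih hn
      have hEsucc : E (n+1) = E n ∩ H (n+1) := by
        rw [hE, hE]
        ext x
        simp only [Set.mem_iInter, Set.mem_inter_iff, Finset.mem_Icc]
        constructor
        · intro h
          exact ⟨fun j hj => h j ⟨hj.1, by omega⟩, h (n+1) ⟨by omega, le_rfl⟩⟩
        · rintro ⟨h1, h2⟩ j ⟨hj1, hj2⟩
          rcases eq_or_lt_of_le hj2 with rfl | hlt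
          · exact h2
          · exact h1 j ⟨hj1, by omega⟩
      by_cases hle : (μ (E n)).toReal ≤ (2:ℝ) ^ (-s)
      · refine le_trans ?_ (le_max_left _ _)
        refine le_trans ?_ hle
        exact ENNReal.toReal_mono (measure_ne_top μ _)
          (measure_mono (by rw [hEsucc]; exact Set.inter_subset_left))
      · push_neg at hle
        have hlt := hcond n (by omega) hle
        have hEn : (μ (E n)).toReal ≤ (2:ℝ) ^ (-((n : ℝ) * ℓ)) := by
          rcases le_max_iff.mp ihn with h | h
          · exact absurd h (not_le.mpr hle)
          · exact h
        refine le_trans ?_ (le_max_right _ _)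
        rw [hEsucc]
        calc (μ (E n ∩ H (n+1))).toReal ≤ (2:ℝ) ^ (-ℓ) * (μ (E n)).toReal := le_of_lt hlt
          _ ≤ (2:ℝ) ^ (-ℓ) * (2:ℝ) ^ (-((n : ℝ) * ℓ)) := by
              apply mul_le_mul_of_nonneg_left hEn (le_of_lt (Real.rpow_pos_of_pos two_pos _))
          _ = (2:ℝ) ^ (-(((n+1 : ℕ) : ℝ) * ℓ)) := by
              rw [← Real.rpow_add two_pos]; push_cast; ring_nf
  exact key q le_rfl
end

section
/- Let X be ε-close in statistical distance to a distribution with min-entropy k on a finite set, and let A be an event with Pr[X ∈ A] = p > ε. Then the conditional distribution X|A is (ε/p)-close to a distribution with min-entropy at least k − log(1/(p−ε)). -/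
open Finset

open scoped Classical in
/-- if `X` (with distribution `p`) is `ε`-close to a distribution `q` with
min-entropy `k`, and `A` is an event with `Pr[X ∈ A] = pr > ε`, then the conditional
distribution `X | A` is `(ε/pr)`-close to a distribution with min-entropy at least
`k - log₂(1/(pr - ε))`. -/
theorem conditioning_on_event_preserves_entropy
    {α : Type*} [Fintype α]
    (p q : α → ℝ) (hp0 : ∀ x, 0 ≤ p x) (hp1 : ∑ x, p x = 1)
    (hq0 : ∀ x, 0 ≤ q x) (hq1 : ∑ x, q x = 1)
    (k ε : ℝ) (hq : ∀ x, q x ≤ (2:ℝ) ^ (-k))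
    (hsd : (1/2) * ∑ x, |p x - q x| ≤ ε)
    (A : Finset α) (pr : ℝ) (hpr : ∑ x ∈ A, p x = pr) (hε : ε < pr) :
    ∃ r : α → ℝ, (∀ x, 0 ≤ r x) ∧ (∑ x, r x = 1) ∧
      (∀ x, r x ≤ (2:ℝ) ^ (-(k - Real.logb 2 (1/(pr - ε))))) ∧
      (1/2) * ∑ x, |(if x ∈ A then p x / pr else 0) - r x| ≤ ε / pr := by
  classical
  have hε0 : 0 ≤ ε := le_trans (by positivity) hsd
  have hpr0 : 0 < pr := lt_of_le_of_lt hε0 hε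
  set qA : ℝ := ∑ x ∈ A, q x with hqA_def
  -- half-formulas for max
  have hmax : ∀ a : ℝ, max a 0 = (a + |a|) / 2 := by
    intro a
    rcases le_total a 0 with h | h
    · rw [max_eq_right h, abs_of_nonpos h]; ring
    · rw [max_eq_left h, abs_of_nonneg h]; ring
  have habs : ∀ a : ℝ, |a| = max a 0 + max (-a) 0 := by
    intro a
    rcases le_total a 0 with h | h
    · rw [max_eq_right h, max_eq_left (neg_nonneg.2 h), abs_of_nonpos h]; ring
    · rw [max_eq_left h, max_eq_right (neg_nonpos.2 h), abs_of_nonneg h]; ring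
  have hsum_abs : ∑ x, |p x - q x| ≤ 2 * ε := by linarith
  -- one-sided total sums
  have hSplus_all : ∑ x, max (p x - q x) 0 ≤ ε := by
    have h1 : ∑ x, max (p x - q x) 0 = (∑ x, (p x - q x) + ∑ x, |p x - q x|) / 2 := by
      rw [← Finset.sum_add_distrib, Finset.sum_div]
      exact Finset.sum_congr rfl fun x _ => hmax _

    have h2 : ∑ x, (p x - q x) = 0 := by
      rw [Finset.sum_sub_distrib, hp1, hq1]; ring
    rw [h1, h2]; linarith
  have hSminus_all : ∑ x, max (q x - p x) 0 ≤ ε := by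
    have h1 : ∑ x, max (q x - p x) 0 = (∑ x, (q x - p x) + ∑ x, |q x - p x|) / 2 := by
      rw [← Finset.sum_add_distrib, Finset.sum_div]
      exact Finset.sum_congr rfl fun x _ => hmax _
    have h2 : ∑ x, (q x - p x) = 0 := by
      rw [Finset.sum_sub_distrib, hp1, hq1]; ring
    have h3 : ∑ x, |q x - p x| = ∑ x, |p x - q x| :=
      Finset.sum_congr rfl fun x _ => abs_sub_comm _ _
    rw [h1, h2, h3]; linarith
  set Sp : ℝ := ∑ x ∈ A, max (p x - q x) 0 with hSp_def
  set Sm : ℝ := ∑ x ∈ A, max (q x - p x) 0 with hSm_def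
  have hSp_le : Sp ≤ ε := le_trans
    (Finset.sum_le_sum_of_subset_of_nonneg (Finset.subset_univ A)
      (fun x _ _ => le_max_right _ _)) hSplus_all
  have hSm_le : Sm ≤ ε := le_trans
    (Finset.sum_le_sum_of_subset_of_nonneg (Finset.subset_univ A)
      (fun x _ _ => le_max_right _ _)) hSminus_all
  have hSA : ∑ x ∈ A, |p x - q x| = Sp + Sm := by
    rw [hSp_def, hSm_def, ← Finset.sum_add_distrib]
    refine Finset.sum_congr rfl fun x _ => ?_
    rw [habs (p x - q x)]; ring_nf
  have hdiff : pr - qA = Sp - Sm := by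
    have hpt : ∀ x, p x - q x = max (p x - q x) 0 - max (q x - p x) 0 := by
      intro x
      rcases le_total (p x - q x) 0 with h | h
      · rw [max_eq_right h, max_eq_left (by linarith)]; ring
      · rw [max_eq_left h, max_eq_right (by linarith)]; ring
    rw [← hpr, hqA_def, hSp_def, hSm_def, ← Finset.sum_sub_distrib, ← Finset.sum_sub_distrib]
    exact Finset.sum_congr rfl fun x _ => hpt x
  have hqA_lb : pr - ε ≤ qA := by
    have : Sp - Sm ≤ ε := by
      have : 0 ≤ Sm := Finset.sum_nonneg fun x _ => le_max_right _ _
      linarith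
    linarith [hdiff]
  have hqA0 : 0 < qA := by linarith
  have hpe0 : 0 < pr - ε := by linarith
  refine ⟨fun x => if x ∈ A then q x / qA else 0, ?_, ?_, ?_, ?_⟩
  · intro x
    dsimp only
    split_ifs with h
    · exact div_nonneg (hq0 x) hqA0.le
    · exact le_rfl
  · simp only
    rw [Finset.sum_ite_mem, Finset.univ_inter, ← Finset.sum_div, ← hqA_def,
      div_self (ne_of_gt hqA0)]
  · intro x
    have h2k : (0:ℝ) < (2:ℝ) ^ k := Real.rpow_pos_of_pos (by norm_num) k
    have hrhs : (2:ℝ) ^ (-(k - Real.logb 2 (1/(pr - ε)))) = (2:ℝ) ^ (-k) / (pr - ε) := by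
      rw [neg_sub, Real.rpow_sub (by norm_num : (0:ℝ) < 2),
        Real.rpow_logb (by norm_num) (by norm_num) (by positivity),
        Real.rpow_neg (by norm_num : (0:ℝ) ≤ 2)]
      field_simp
    rw [hrhs]
    dsimp only
    split_ifs with h
    · exact div_le_div₀ (by positivity) (hq x) hpe0 hqA_lb
    · positivity
  · -- statistical distance bound
    have hterm : ∀ x, |(if x ∈ A then p x / pr else 0) - (if x ∈ A then q x / qA else 0)|
        = if x ∈ A then |p x / pr - q x / qA| else 0 := by
      intro x; split_ifs <;> simp
    have hsum1 : ∑ x, |(if x ∈ A then p x / pr else 0) - (if x ∈ A then q x / qA else 0)|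
        = ∑ x ∈ A, |p x / pr - q x / qA| := by
      rw [Finset.sum_congr rfl (fun x _ => hterm x), Finset.sum_ite_mem, Finset.univ_inter]
    have hpt : ∀ x ∈ A, |p x / pr - q x / qA|
        ≤ |p x - q x| / pr + q x * |1/pr - 1/qA| := by
      intro x _
      have heq : p x / pr - q x / qA = (p x - q x) / pr + q x * (1/pr - 1/qA) := by
        field_simp; ring
      rw [heq]
      calc |(p x - q x) / pr + q x * (1/pr - 1/qA)|
          ≤ |(p x - q x) / pr| + |q x * (1/pr - 1/qA)| := abs_add_le _ _
        _ = |p x - q x| / pr + q x * |1/pr - 1/qA| := by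
            rw [abs_div, abs_of_pos hpr0, abs_mul, abs_of_nonneg (hq0 x)]
    have hsum2 : ∑ x ∈ A, |p x / pr - q x / qA|
        ≤ (Sp + Sm) / pr + qA * |1/pr - 1/qA| := by
      calc ∑ x ∈ A, |p x / pr - q x / qA|
          ≤ ∑ x ∈ A, (|p x - q x| / pr + q x * |1/pr - 1/qA|) :=
            Finset.sum_le_sum hpt
        _ = (∑ x ∈ A, |p x - q x|) / pr + (∑ x ∈ A, q x) * |1/pr - 1/qA| := by
            rw [Finset.sum_add_distrib, Finset.sum_div, ← Finset.sum_mul]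
        _ = (Sp + Sm) / pr + qA * |1/pr - 1/qA| := by rw [hSA, ← hqA_def]
    have habs_inv : qA * |1/pr - 1/qA| = |Sp - Sm| / pr := by
      have h1 : 1/pr - 1/qA = (qA - pr) / (pr * qA) := by field_simp
      rw [h1, abs_div, abs_of_pos (by positivity : (0:ℝ) < pr * qA)]
      have h2 : |qA - pr| = |Sp - Sm| := by
        rw [← abs_neg (qA - pr)]; congr 1; linarith [hdiff]
      rw [h2]; field_simp
    have hkey : Sp + Sm + |Sp - Sm| ≤ 2 * ε := by
      rcases abs_cases (Sp - Sm) with ⟨h, _⟩ | ⟨h, _⟩ <;> rw [h] <;> linarith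
    have hfinal : ∑ x ∈ A, |p x / pr - q x / qA| ≤ 2 * ε / pr := by
      calc ∑ x ∈ A, |p x / pr - q x / qA|
          ≤ (Sp + Sm) / pr + |Sp - Sm| / pr := by rw [← habs_inv]; exact hsum2
        _ = (Sp + Sm + |Sp - Sm|) / pr := by ring
        _ ≤ 2 * ε / pr := by gcongr
    rw [hsum1, mul_div_assoc] at *
    linarith [hfinal]
end

section
/- Suppose (X, Z) is a joint distribution such that X is ε-close to uniform on {0,1}^{a} even conditioned on Z (i.e., (X, Z) ≈_ε (U_a, Z)), and let V be a random variable with range of size at most 2^{b} where b ≤ a − ℓ for some ℓ > 0. Then with probability at least 1 − 2ε' over the fixing of (Z, V) — for appropriate ε' with ε ≤ ε'² — the conditional distribution of X is ε'-close to a distribution with min-entropy at least a − b − log(1/ε') ≥ ℓ − log(1/ε'). -/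
/-!
Cap the law of `(X, Z, V)` on every `(x, z)` at the law `2⁻ᵃ Pr[Z = z]` of `(U, Z)`; this removes
total mass at most the statistical distance `ε`. Call a fibre `(z, v)` bad if the capping removes
more than an `ε'`-fraction of it (total mass `≤ ε / ε' ≤ ε'` by Markov), or if it is lighter than
`Pr[Z = z] / (2ᵃ K)` with `K = 2ᵇ⁻ᵃ / ε'` (total mass `≤ |V| ε' 2⁻ᵇ ≤ ε'`). On a good fibre the
capped part is at most `K` times the fibre's mass, and spreading the removed mass over the room
left below that cap yields a distribution bounded by `K`, i.e. of min-entropy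
`≥ a - b - log₂ (1/ε')`, that is `ε'`-close to the conditional law of `X`.
-/

open Finset

section

variable {ι : Type*}

theorem sum_filter_mul_lt_le_div {s : Finset ι} {m h : ι → ℝ} {t : ℝ} (ht : 0 < t)
    (hh : ∀ i ∈ s, 0 ≤ h i) :
    ∑ i ∈ s with t * m i < h i, m i ≤ (∑ i ∈ s, h i) / t := by
  rw [sum_div]
  calc ∑ i ∈ s with t * m i < h i, m i
      ≤ ∑ i ∈ s with t * m i < h i, h i / t :=
        sum_le_sum fun i hi => ((lt_div_iff₀' ht).2 (mem_filter.1 hi).2).le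
    _ ≤ ∑ i ∈ s, h i / t :=
        sum_le_sum_of_subset_of_nonneg (filter_subset _ _)
          fun i hi _ => div_nonneg (hh i hi) ht.le

theorem sum_max_sub_zero_eq_half_sum_abs {s : Finset ι} {f g : ι → ℝ}
    (hfg : ∑ i ∈ s, f i = ∑ i ∈ s, g i) :
    ∑ i ∈ s, max (f i - g i) 0 = (1/2) * ∑ i ∈ s, |f i - g i| := by
  have hmax : ∀ d : ℝ, max d 0 = (1/2) * |d| + (1/2) * d := fun d => by
    rcases le_total 0 d with hd | hd
    · rw [max_eq_left hd, abs_of_nonneg hd]; ring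
    · rw [max_eq_right hd, abs_of_nonpos hd]; ring
  simp only [hmax, sum_add_distrib, ← mul_sum, sum_sub_distrib, hfg, sub_self, mul_zero,
    add_zero]

variable [Fintype ι]

theorem exists_bounded_redistribution {g f : ι → ℝ} {c : ℝ} (hf0 : ∀ i, 0 ≤ f i)
    (hfg : ∀ i, f i ≤ g i) (hfc : ∀ i, f i ≤ c) (hgc : ∑ i, g i ≤ c * Fintype.card ι) :
    ∃ h : ι → ℝ, (∀ i, 0 ≤ h i) ∧ ∑ i, h i = ∑ i, g i ∧ (∀ i, h i ≤ c) ∧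
      (1/2) * ∑ i, |g i - h i| ≤ ∑ i, (g i - f i) := by
  set E := ∑ i, (g i - f i)
  set C := ∑ i, (c - f i)
  have hE0 : 0 ≤ E := sum_nonneg fun i _ => sub_nonneg.2 (hfg i)
  have hEC : E ≤ C := by
    simp only [E, C, sum_sub_distrib, sum_const, card_univ, nsmul_eq_mul]
    linarith
  -- spread the lost mass `E` over the slack `c - f i`, in proportion to it
  set t := E / C
  have ht0 : 0 ≤ t := div_nonneg hE0 (hE0.trans hEC)
  have ht1 : t ≤ 1 := div_le_one_of_le₀ hEC (hE0.trans hEC)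
  have htC : t * C = E := by
    rcases (hE0.trans hEC).eq_or_lt with hC | hC
    · rw [← hC, mul_zero]; linarith
    · exact div_mul_cancel₀ E hC.ne'
  have hslack : ∀ i, 0 ≤ c - f i := fun i => sub_nonneg.2 (hfc i)
  refine ⟨fun i => f i + t * (c - f i), fun i => add_nonneg (hf0 i) (mul_nonneg ht0 (hslack i)),
    ?_, fun i => by nlinarith [hslack i], ?_⟩
  · rw [sum_add_distrib, ← mul_sum, htC]
    simp only [E, sum_sub_distrib]
    ring
  · calc (1/2) * ∑ i, |g i - (f i + t * (c - f i))|
        ≤ (1/2) * ∑ i, ((g i - f i) + t * (c - f i)) := by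
          gcongr with i
          have := mul_nonneg ht0 (hslack i)
          rw [abs_le]; constructor <;> linarith [hfg i]
      _ = E := by rw [sum_add_distrib, ← mul_sum, htC]; ring

theorem exists_bounded_distrib_near {g f : ι → ℝ} {K : ℝ} (hf0 : ∀ i, 0 ≤ f i)
    (hfg : ∀ i, f i ≤ g i) (hfK : ∀ i, f i ≤ K * ∑ j, g j) (hK : 1 ≤ K * Fintype.card ι) :
    ∃ r : ι → ℝ, (∀ i, 0 ≤ r i) ∧ ∑ i, r i = 1 ∧ (∀ i, r i ≤ K) ∧
      (1/2) * ∑ i, |g i - r i * ∑ j, g j| ≤ ∑ i, (g i - f i) := by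
  have hg0 : ∀ i, 0 ≤ g i := fun i => (hf0 i).trans (hfg i)
  have hloss : 0 ≤ ∑ i, (g i - f i) := sum_nonneg fun i _ => sub_nonneg.2 (hfg i)
  rcases (sum_nonneg fun i (_ : i ∈ univ) => hg0 i).eq_or_lt with hM | hM
  · have hN : (0 : ℝ) < Fintype.card ι := by
      have : Fintype.card ι ≠ 0 := by rintro h; norm_num [h] at hK
      positivity
    refine ⟨fun _ => (Fintype.card ι : ℝ)⁻¹, fun _ => by positivity, ?_, fun _ => ?_, ?_⟩
    · simp [hN.ne']
    · rw [inv_le_iff_one_le_mul₀ hN]; linarith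
    · rw [← hM]
      simp only [mul_zero, sub_zero, abs_of_nonneg (hg0 _), ← hM]
      linarith
  · obtain ⟨h, h0, hsum, hle, hclose⟩ :=
      exists_bounded_redistribution hf0 hfg hfK (by nlinarith)
    refine ⟨fun i => h i / ∑ j, g j, fun i => div_nonneg (h0 i) hM.le, ?_, fun i => ?_, ?_⟩
    · rw [← sum_div, hsum, div_self hM.ne']
    · rw [div_le_iff₀ hM]; exact hle i
    · simpa only [div_mul_cancel₀ _ hM.ne'] using hclose

end

namespace ShortLeakage

variable {α β γ : Type*}

noncomputable def massZV [Fintype α] (p : α × β × γ → ℝ) (zv : β × γ) : ℝ :=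
  ∑ x, p (x, zv.1, zv.2)

theorem massZV_nonneg [Fintype α] {p : α × β × γ → ℝ} (hp0 : ∀ w, 0 ≤ p w) (zv : β × γ) :
    0 ≤ massZV p zv :=
  sum_nonneg fun _ _ => hp0 _

section Capping

variable [Fintype γ]

noncomputable def jointXZ (p : α × β × γ → ℝ) (xz : α × β) : ℝ := ∑ v, p (xz.1, xz.2, v)

/-- `p` rescaled on each `(x, z)`-fibre so that its `(X, Z)`-marginal becomes
`min (jointXZ p (x, z)) (c (x, z))`; on null fibres the division by zero gives `0`. -/
noncomputable def capped (p : α × β × γ → ℝ) (c : α × β → ℝ) (w : α × β × γ) : ℝ :=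
  p w * (min (jointXZ p (w.1, w.2.1)) (c (w.1, w.2.1)) / jointXZ p (w.1, w.2.1))

variable {p : α × β × γ → ℝ} {c : α × β → ℝ}

theorem jointXZ_nonneg (hp0 : ∀ w, 0 ≤ p w) (xz : α × β) : 0 ≤ jointXZ p xz :=
  sum_nonneg fun _ _ => hp0 _

theorem le_jointXZ (hp0 : ∀ w, 0 ≤ p w) (w : α × β × γ) : p w ≤ jointXZ p (w.1, w.2.1) :=
  single_le_sum (f := fun v => p (w.1, w.2.1, v)) (fun _ _ => hp0 _) (mem_univ w.2.2)

theorem capped_nonneg (hp0 : ∀ w, 0 ≤ p w) (hc0 : ∀ xz, 0 ≤ c xz) (w : α × β × γ) :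
    0 ≤ capped p c w :=
  mul_nonneg (hp0 w) (div_nonneg (le_min (jointXZ_nonneg hp0 _) (hc0 _)) (jointXZ_nonneg hp0 _))

theorem capped_le (hp0 : ∀ w, 0 ≤ p w) (w : α × β × γ) : capped p c w ≤ p w :=
  mul_le_of_le_one_right (hp0 w) (div_le_one_of_le₀ (min_le_left _ _) (jointXZ_nonneg hp0 _))

theorem capped_le_cap (hp0 : ∀ w, 0 ≤ p w) (hc0 : ∀ xz, 0 ≤ c xz) (w : α × β × γ) :
    capped p c w ≤ c (w.1, w.2.1) := by
  set P := jointXZ p (w.1, w.2.1)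
  rcases (jointXZ_nonneg hp0 (w.1, w.2.1)).eq_or_lt with hP | hP
  · simp [capped, ← hP, hc0]
  · calc capped p c w ≤ P * (min P (c (w.1, w.2.1)) / P) :=
          mul_le_mul_of_nonneg_right (le_jointXZ hp0 w) (div_nonneg (le_min hP.le (hc0 _)) hP.le)
      _ = min P (c (w.1, w.2.1)) := mul_div_cancel₀ _ hP.ne'
      _ ≤ c (w.1, w.2.1) := min_le_right _ _

theorem sum_sub_capped_fibre (hp0 : ∀ w, 0 ≤ p w) (hc0 : ∀ xz, 0 ≤ c xz) (xz : α × β) :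
    ∑ v, (p (xz.1, xz.2, v) - capped p c (xz.1, xz.2, v)) = max (jointXZ p xz - c xz) 0 := by
  simp only [capped, sum_sub_distrib, ← sum_mul]
  change jointXZ p xz - jointXZ p xz * (min (jointXZ p xz) (c xz) / jointXZ p xz) = _
  rcases (jointXZ_nonneg hp0 xz).eq_or_lt with hP | hP
  · simp [← hP, hc0]
  · rw [mul_div_cancel₀ _ hP.ne']
    rcases le_total (jointXZ p xz) (c xz) with h | h
    · rw [min_eq_left h, max_eq_right (by linarith)]; ring
    · rw [min_eq_right h, max_eq_left (by linarith)]

theorem sum_sub_capped [Fintype α] [Fintype β] (hp0 : ∀ w, 0 ≤ p w) (hc0 : ∀ xz, 0 ≤ c xz) :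
    ∑ w, (p w - capped p c w) = ∑ xz, max (jointXZ p xz - c xz) 0 := by
  simp only [← sum_sub_capped_fibre hp0 hc0, Fintype.sum_prod_type]

end Capping

variable [Fintype α] [Fintype γ]

/-- The law of `(U, Z)` at `(x, z)`, which does not depend on `x`. -/
noncomputable def uniformXZ (p : α × β × γ → ℝ) (z : β) : ℝ :=
  (Fintype.card α : ℝ)⁻¹ * ∑ x, ∑ v, p (x, z, v)

noncomputable def belowUniform (p : α × β × γ → ℝ) : α × β × γ → ℝ :=
  capped p fun xz => uniformXZ p xz.2

noncomputable def lostMass (p : α × β × γ → ℝ) (zv : β × γ) : ℝ :=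
  ∑ x, (p (x, zv.1, zv.2) - belowUniform p (x, zv.1, zv.2))

variable {p : α × β × γ → ℝ}

theorem uniformXZ_nonneg (hp0 : ∀ w, 0 ≤ p w) (z : β) : 0 ≤ uniformXZ p z :=
  mul_nonneg (by positivity) (sum_nonneg fun _ _ => sum_nonneg fun _ _ => hp0 _)

theorem lostMass_nonneg (hp0 : ∀ w, 0 ≤ p w) (zv : β × γ) : 0 ≤ lostMass p zv :=
  sum_nonneg fun _ _ => sub_nonneg.2 (capped_le hp0 _)

def IsGoodFibre (p : α × β × γ → ℝ) (K ε' : ℝ) (zv : β × γ) : Prop :=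
  lostMass p zv ≤ ε' * massZV p zv ∧ uniformXZ p zv.1 ≤ K * massZV p zv

theorem exists_distrib_of_isGoodFibre (hp0 : ∀ w, 0 ≤ p w) {K ε' : ℝ}
    (hK : 1 ≤ K * Fintype.card α) {zv : β × γ} (hzv : IsGoodFibre p K ε' zv) :
    ∃ r : α → ℝ, (∀ x, 0 ≤ r x) ∧ ∑ x, r x = 1 ∧ (∀ x, r x ≤ K) ∧
      (1/2) * ∑ x, |p (x, zv.1, zv.2) - r x * massZV p zv| ≤ ε' * massZV p zv := by
  have hc0 : ∀ xz : α × β, 0 ≤ uniformXZ p xz.2 := fun xz => uniformXZ_nonneg hp0 xz.2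
  obtain ⟨r, hr0, hr1, hrK, hclose⟩ := exists_bounded_distrib_near
    (g := fun x => p (x, zv.1, zv.2)) (f := fun x => belowUniform p (x, zv.1, zv.2))
    (fun _ => capped_nonneg hp0 hc0 _) (fun _ => capped_le hp0 _)
    (fun _ => (capped_le_cap hp0 hc0 _).trans hzv.2) hK
  exact ⟨r, hr0, hr1, hrK, hclose.trans hzv.1⟩

variable [Fintype β]

theorem sum_massZV : ∑ zv, massZV p zv = ∑ w, p w := by
  simp only [massZV]
  rw [sum_comm]
  exact (Fintype.sum_prod_type p).symm

theorem sum_jointXZ : ∑ xz, jointXZ p xz = ∑ w, p w := by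
  simp only [jointXZ, Fintype.sum_prod_type]

theorem sum_uniformXZ : ∑ xz : α × β, uniformXZ p xz.2 = ∑ w, p w := by
  rcases isEmpty_or_nonempty α with hα | hα
  · simp
  · simp only [uniformXZ, Fintype.sum_prod_type, sum_const, card_univ, nsmul_eq_mul]
    rw [← mul_sum, mul_inv_cancel_left₀ (by positivity), sum_comm]

theorem sum_uniformXZ_fibres :
    ∑ zv : β × γ, uniformXZ p zv.1 = Fintype.card γ / Fintype.card α * ∑ w, p w := by
  simp only [uniformXZ, Fintype.sum_prod_type, sum_const, card_univ, nsmul_eq_mul, ← mul_sum]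
  rw [sum_comm (s := univ (α := β))]
  ring

theorem sum_lostMass_le (hp0 : ∀ w, 0 ≤ p w) {ε : ℝ}
    (hsd : (1/2) * ∑ xz, |jointXZ p xz - uniformXZ p xz.2| ≤ ε) :
    ∑ zv, lostMass p zv ≤ ε := by
  have hc0 : ∀ xz : α × β, 0 ≤ uniformXZ p xz.2 := fun xz => uniformXZ_nonneg hp0 xz.2
  calc ∑ zv, lostMass p zv = ∑ w, (p w - belowUniform p w) := by
        simp only [lostMass]
        rw [sum_comm]
        exact (Fintype.sum_prod_type fun w => p w - belowUniform p w).symm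
    _ = (1/2) * ∑ xz, |jointXZ p xz - uniformXZ p xz.2| := by
        rw [belowUniform, sum_sub_capped hp0 hc0,
          sum_max_sub_zero_eq_half_sum_abs (sum_jointXZ.trans sum_uniformXZ.symm)]
    _ ≤ ε := hsd

open scoped Classical in
theorem sum_massZV_not_isGoodFibre_le (hp0 : ∀ w, 0 ≤ p w) {K ε ε' : ℝ} (hK : 0 < K)
    (hε' : 0 < ε') (hsd : (1/2) * ∑ xz, |jointXZ p xz - uniformXZ p xz.2| ≤ ε) :
    ∑ zv with ¬IsGoodFibre p K ε' zv, massZV p zv ≤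
      ε / ε' + Fintype.card γ / Fintype.card α * (∑ w, p w) / K := by
  calc ∑ zv with ¬IsGoodFibre p K ε' zv, massZV p zv
      ≤ ∑ zv with ε' * massZV p zv < lostMass p zv, massZV p zv +
          ∑ zv with K * massZV p zv < uniformXZ p zv.1, massZV p zv := by
        simp only [sum_filter, ← sum_add_distrib]
        refine sum_le_sum fun zv _ => ?_
        have := massZV_nonneg hp0 zv
        simp only [IsGoodFibre, not_and_or, not_le]
        split_ifs <;> simp_all
    _ ≤ (∑ zv, lostMass p zv) / ε' + (∑ zv : β × γ, uniformXZ p zv.1) / K :=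
        add_le_add (sum_filter_mul_lt_le_div hε' fun zv _ => lostMass_nonneg hp0 zv)
          (sum_filter_mul_lt_le_div hK fun zv _ => uniformXZ_nonneg hp0 zv.1)
    _ ≤ ε / ε' + Fintype.card γ / Fintype.card α * (∑ w, p w) / K := by
        rw [sum_uniformXZ_fibres]
        gcongr
        exact sum_lostMass_le hp0 hsd

open scoped Classical in
theorem le_sum_massZV_filter_exists_distrib (hp0 : ∀ w, 0 ≤ p w) (hp1 : ∑ w, p w = 1)
    {K ε ε' : ℝ} (hK : 1 ≤ K * Fintype.card α)
    (hγ : (Fintype.card γ : ℝ) ≤ ε' * (K * Fintype.card α)) (hε' : 0 < ε') (hεε' : ε ≤ ε' ^ 2)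
    (hsd : (1/2) * ∑ xz, |jointXZ p xz - uniformXZ p xz.2| ≤ ε) :
    1 - 2 * ε' ≤ ∑ zv with ∃ r : α → ℝ, (∀ x, 0 ≤ r x) ∧ ∑ x, r x = 1 ∧ (∀ x, r x ≤ K) ∧
      (1/2) * ∑ x, |p (x, zv.1, zv.2) - r x * massZV p zv| ≤ ε' * massZV p zv,
      massZV p zv := by
  have hN : (0 : ℝ) < Fintype.card α := by
    have : Fintype.card α ≠ 0 := by rintro h; norm_num [h] at hK
    positivity
  have hK0 : 0 < K := pos_of_mul_pos_left (one_pos.trans_le hK) hN.le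
  have hbad := sum_massZV_not_isGoodFibre_le hp0 hK0 hε' hsd
  have hlost : ε / ε' ≤ ε' := by rw [div_le_iff₀ hε']; nlinarith
  have hshort : Fintype.card γ / Fintype.card α * (∑ w, p w) / K ≤ ε' := by
    rw [hp1, mul_one, div_div, div_le_iff₀ (by positivity)]; linarith
  calc 1 - 2 * ε' ≤ ∑ zv, massZV p zv - ∑ zv with ¬IsGoodFibre p K ε' zv, massZV p zv := by
        rw [sum_massZV, hp1]; linarith
    _ = ∑ zv with IsGoodFibre p K ε' zv, massZV p zv := by
        rw [← sum_filter_add_sum_filter_not univ (IsGoodFibre p K ε')]; ring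
    _ ≤ _ := sum_le_sum_of_subset_of_nonneg
        (monotone_filter_right _ fun _ _ => exists_distrib_of_isGoodFibre hp0 hK)
        fun zv _ _ => massZV_nonneg hp0 zv

end ShortLeakage

open scoped Classical in
theorem conditioning_on_short_leakage_general
    {a b : ℕ} {β γ : Type*} [Fintype β] [Fintype γ]
    (p : (Fin a → Bool) × β × γ → ℝ) (hp0 : ∀ w, 0 ≤ p w) (hp1 : ∑ w, p w = 1)
    (hγ : (Fintype.card γ : ℝ) ≤ (2:ℝ) ^ b)
    (ℓ : ℝ) (hb : (b : ℝ) ≤ (a : ℝ) - ℓ)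
    (ε ε' : ℝ) (hε' : 0 < ε') (hεε' : ε ≤ ε' ^ 2)
    (hsd : (1/2) * ∑ w : (Fin a → Bool) × β,
        |(∑ v : γ, p (w.1, w.2, v)) -
          ((2:ℝ)^a)⁻¹ * (∑ x : Fin a → Bool, ∑ v : γ, p (x, w.2, v))| ≤ ε) :
    (∑ zv ∈ univ.filter (fun zv : β × γ => ∃ r : (Fin a → Bool) → ℝ,
        (∀ x, 0 ≤ r x) ∧ (∑ x, r x = 1) ∧
        (∀ x, r x ≤ (2:ℝ) ^ (-((a : ℝ) - (b : ℝ) - Real.logb 2 (1/ε')))) ∧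
        (1/2) * ∑ x : Fin a → Bool,
            |p (x, zv.1, zv.2) - r x * (∑ x' : Fin a → Bool, p (x', zv.1, zv.2))| ≤
          ε' * (∑ x' : Fin a → Bool, p (x', zv.1, zv.2))),
      (∑ x : Fin a → Bool, p (x, zv.1, zv.2)) ≥ 1 - 2 * ε') ∧
    (a : ℝ) - (b : ℝ) - Real.logb 2 (1/ε') ≥ ℓ - Real.logb 2 (1/ε') := by
  refine ⟨?_, by linarith⟩
  rcases le_or_gt (1 - 2 * ε') 0 with hε'_large | hε'_small
  · exact hε'_large.trans (sum_nonneg fun zv _ => ShortLeakage.massZV_nonneg hp0 zv)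
  have hcard : (Fintype.card (Fin a → Bool) : ℝ) = 2 ^ a := by simp
  have hK : (2:ℝ) ^ (-((a : ℝ) - b - Real.logb 2 (1/ε'))) * Fintype.card (Fin a → Bool) =
      2 ^ b / ε' := by
    rw [hcard, show -((a : ℝ) - b - Real.logb 2 (1/ε')) = Real.logb 2 (1/ε') + b - a by ring,
      Real.rpow_sub two_pos, Real.rpow_add two_pos, Real.rpow_logb two_pos (by norm_num)
      (by positivity), Real.rpow_natCast, Real.rpow_natCast]
    field_simp
  have h2b : (1:ℝ) ≤ 2 ^ b := one_le_pow₀ one_le_two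
  rw [← hcard] at hsd
  exact ShortLeakage.le_sum_massZV_filter_exists_distrib hp0 hp1
    (by rw [hK, le_div_iff₀ hε']; linarith) (by rw [hK, mul_div_cancel₀ _ hε'.ne']; exact hγ)
    hε' hεε' hsd

open scoped Classical in
/-- suppose `(X, Z, V)` are jointly distributed with `X ∈ {0,1}^a`,
`(X, Z) ≈_ε (U_a, Z)`, `V` ranging over at most `2^b` values with `b ≤ a - ℓ` for some
`ℓ > 0`, and `ε' > 0` satisfies `ε ≤ ε'²`.  Then with probability at least `1 - 2ε'`
over the fixing of `(Z, V)`, the conditional distribution of `X` is `ε'`-close to a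
distribution with min-entropy at least `a - b - log₂(1/ε')`, and moreover
`a - b - log₂(1/ε') ≥ ℓ - log₂(1/ε')`.  (Conditional statements are scaled by
`Pr[(Z,V) = (z,v)]`.) -/
theorem conditioning_on_short_leakage
    {a b : ℕ} {β γ : Type*} [Fintype β] [Fintype γ]
    (p : (Fin a → Bool) × β × γ → ℝ) (hp0 : ∀ w, 0 ≤ p w) (hp1 : ∑ w, p w = 1)
    (hγ : (Fintype.card γ : ℝ) ≤ (2:ℝ) ^ b)
    (ℓ : ℝ) (hℓ : 0 < ℓ) (hb : (b : ℝ) ≤ (a : ℝ) - ℓ)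
    (ε ε' : ℝ) (hε' : 0 < ε') (hεε' : ε ≤ ε' ^ 2)
    (hsd : (1/2) * ∑ w : (Fin a → Bool) × β,
        |(∑ v : γ, p (w.1, w.2, v)) -
          ((2:ℝ)^a)⁻¹ * (∑ x : Fin a → Bool, ∑ v : γ, p (x, w.2, v))| ≤ ε) :
    (∑ zv ∈ univ.filter (fun zv : β × γ => ∃ r : (Fin a → Bool) → ℝ,
        (∀ x, 0 ≤ r x) ∧ (∑ x, r x = 1) ∧
        (∀ x, r x ≤ (2:ℝ) ^ (-((a : ℝ) - (b : ℝ) - Real.logb 2 (1/ε')))) ∧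
        (1/2) * ∑ x : Fin a → Bool,
            |p (x, zv.1, zv.2) - r x * (∑ x' : Fin a → Bool, p (x', zv.1, zv.2))| ≤
          ε' * (∑ x' : Fin a → Bool, p (x', zv.1, zv.2))),
      (∑ x : Fin a → Bool, p (x, zv.1, zv.2)) ≥ 1 - 2 * ε') ∧
    (a : ℝ) - (b : ℝ) - Real.logb 2 (1/ε') ≥ ℓ - Real.logb 2 (1/ε') :=
  conditioning_on_short_leakage_general p hp0 hp1 hγ ℓ hb ε ε' hε' hεε' hsd
end

section
/- Every (k, k', ε)-non-malleable condenser with k' ≥ m is a weaker object than a (k, ε)-non-malleable extractor with output length m in the following sense: any (k, ε)-non-malleable extractor nmExt: {0,1}^n × {0,1}^d → {0,1}^m is also a (k, m − log(1/ε'), O(√ε) + ε')-non-malleable condenser for appropriate ε' (in particular, for ε' = ε^{1/3}, it is a (k, m − (1/3)log(1/ε), O(ε^{1/3}))-non-malleable condenser). -/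
open Finset

noncomputable section
open scoped Classical

/-- Statistical distance between two mass functions on a finite type. -/
def SD {α : Type*} [Fintype α] (p q : α → ℝ) : ℝ := (1/2) * ∑ x, |p x - q x|

/-- `p` is a probability mass function. -/
def IsDist {α : Type*} [Fintype α] (p : α → ℝ) : Prop :=
  (∀ x, 0 ≤ p x) ∧ ∑ x, p x = 1

variable {n d m : ℕ}

/-- `(k, ε)`-non-malleable extractor. -/
def IsNMExt (k ε : ℝ)
    (nm : (Fin n → Bool) → (Fin d → Bool) → (Fin m → Bool)) : Prop :=
  ∀ X : (Fin n → Bool) → ℝ, IsDist X → (∀ x, X x ≤ (2:ℝ) ^ (-k)) →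
    ∀ A : (Fin d → Bool) → (Fin d → Bool), (∀ y, A y ≠ y) →
      SD (fun z : (Fin m → Bool) × (Fin m → Bool) × (Fin d → Bool) =>
            ((2:ℝ)^d)⁻¹ *
              ∑ x ∈ univ.filter (fun x => nm x z.2.2 = z.1 ∧ nm x (A z.2.2) = z.2.1), X x)
         (fun z => ((2:ℝ)^m)⁻¹ * ((2:ℝ)^d)⁻¹ *
            ∑ x ∈ univ.filter (fun x => nm x (A z.2.2) = z.2.1), X x) ≤ ε

/-- `(k, k', ε)`-non-malleable condenser: for any `(n,k)`-source `X`, uniform seed `Y`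
and fixed-point-free adversary `𝒜`, with probability `1 - ε` over `Y = y`, with
probability `1 - ε` over `z' ← nmCond(X, 𝒜(y))`, the conditional distribution of
`nmCond(X, y)` given `nmCond(X, 𝒜(y)) = z'` is `ε`-close to an `(m, k')`-source.
(Conditional statements are scaled by `Pr[nmCond(X, 𝒜(y)) = z']`.) -/
def IsNMCond (k k' ε : ℝ)
    (f : (Fin n → Bool) → (Fin d → Bool) → (Fin m → Bool)) : Prop :=
  ∀ X : (Fin n → Bool) → ℝ, IsDist X → (∀ x, X x ≤ (2:ℝ) ^ (-k)) →
    ∀ A : (Fin d → Bool) → (Fin d → Bool), (∀ y, A y ≠ y) →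
      ((univ.filter (fun y : Fin d → Bool =>
          ∑ z' ∈ univ.filter (fun z' : Fin m → Bool =>
              ∃ r : (Fin m → Bool) → ℝ, (∀ u, 0 ≤ r u) ∧ (∑ u, r u = 1) ∧
                (∀ u, r u ≤ (2:ℝ) ^ (-k')) ∧
                (1/2) * ∑ u : Fin m → Bool,
                    |(∑ x ∈ univ.filter (fun x => f x y = u ∧ f x (A y) = z'), X x) -
                      r u * (∑ x ∈ univ.filter (fun x => f x (A y) = z'), X x)| ≤
                  ε * (∑ x ∈ univ.filter (fun x => f x (A y) = z'), X x)),
            (∑ x ∈ univ.filter (fun x => f x (A y) = z'), X x) ≥ 1 - ε)).card : ℝ) ≥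
        (1 - ε) * (2:ℝ) ^ d

/-- a non-malleable condenser is a strict relaxation of a non-malleable
extractor: there is an absolute constant `C > 0` such that every `(k, ε)`-non-malleable
extractor with output length `m` is also a
`(k, m - (1/3)·log₂(1/ε), C·ε^{1/3})`-non-malleable condenser. -/
theorem nm_extractor_is_nm_condenser :
    ∃ C : ℝ, 0 < C ∧
      ∀ (n d m : ℕ) (k ε : ℝ), 0 < ε →
        ∀ nm : (Fin n → Bool) → (Fin d → Bool) → (Fin m → Bool),
          IsNMExt k ε nm →
          IsNMCond k (m - (1/3) * Real.logb 2 (1/ε)) (C * ε ^ ((1:ℝ)/3)) nm := by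
  refine ⟨1, one_pos, ?_⟩
  intro n d m k ε hε nm hExt
  intro X hX hXk A hA
  simp only [one_mul]
  by_cases h1 : 1 ≤ ε
  · have he3 : (1:ℝ) ≤ ε ^ ((1:ℝ)/3) := Real.one_le_rpow h1 (by norm_num)
    have h2 : (1 - ε ^ ((1:ℝ)/3)) * (2:ℝ)^d ≤ 0 := by
      have h2d : (0:ℝ) ≤ (2:ℝ)^d := by positivity
      nlinarith
    exact le_trans h2 (Nat.cast_nonneg _)
  push_neg at h1
  have he3pos : 0 < ε ^ ((1:ℝ)/3) := Real.rpow_pos_of_pos hε _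
  have htpos : 0 < ε ^ ((2:ℝ)/3) := Real.rpow_pos_of_pos hε _
  have hte : ε ^ ((2:ℝ)/3) = ε ^ ((1:ℝ)/3) * ε ^ ((1:ℝ)/3) := by
    rw [← Real.rpow_add hε]; norm_num
  have heq : ε = ε ^ ((2:ℝ)/3) * ε ^ ((1:ℝ)/3) := by
    rw [← Real.rpow_add hε]; norm_num
  have hXnn := hX.1
  have hXsum := hX.2
  set P : (Fin d → Bool) → (Fin m → Bool) → (Fin m → Bool) → ℝ :=
    fun y z1 z2 => ∑ x ∈ univ.filter (fun x => nm x y = z1 ∧ nm x (A y) = z2), X x with hP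
  set Q : (Fin d → Bool) → (Fin m → Bool) → ℝ :=
    fun y z2 => ∑ x ∈ univ.filter (fun x => nm x (A y) = z2), X x with hQ
  set Δ : (Fin d → Bool) → ℝ :=
    fun y => (1/2) * ∑ z1, ∑ z2, |P y z1 z2 - ((2:ℝ)^m)⁻¹ * Q y z2| with hΔ
  have hQnn : ∀ y z2, 0 ≤ Q y z2 := fun y z2 => Finset.sum_nonneg fun x _ => hXnn x
  have hΔnn : ∀ y, 0 ≤ Δ y := by
    intro y
    have h0 : (0:ℝ) ≤ ∑ z1, ∑ z2, |P y z1 z2 - ((2:ℝ)^m)⁻¹ * Q y z2| :=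
      Finset.sum_nonneg fun z1 _ => Finset.sum_nonneg fun z2 _ => abs_nonneg _
    simp only [hΔ]; linarith
  -- the extractor property gives the average bound
  have hkey : ∑ y, Δ y ≤ ε * 2^d := by
    have h := hExt X hX hXk A hA
    unfold SD at h
    have habs : ∀ (y : Fin d → Bool) (z1 z2 : Fin m → Bool),
        |((2:ℝ)^d)⁻¹ * P y z1 z2 - ((2:ℝ)^m)⁻¹ * ((2:ℝ)^d)⁻¹ * Q y z2|
        = ((2:ℝ)^d)⁻¹ * |P y z1 z2 - ((2:ℝ)^m)⁻¹ * Q y z2| := by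
      intro y z1 z2
      rw [show ((2:ℝ)^d)⁻¹ * P y z1 z2 - ((2:ℝ)^m)⁻¹ * ((2:ℝ)^d)⁻¹ * Q y z2
          = ((2:ℝ)^d)⁻¹ * (P y z1 z2 - ((2:ℝ)^m)⁻¹ * Q y z2) by ring,
        abs_mul, abs_of_nonneg (by positivity : (0:ℝ) ≤ ((2:ℝ)^d)⁻¹)]
    have hexp : (∑ z : (Fin m → Bool) × (Fin m → Bool) × (Fin d → Bool),
        |((2:ℝ)^d)⁻¹ * P z.2.2 z.1 z.2.1 -
          ((2:ℝ)^m)⁻¹ * ((2:ℝ)^d)⁻¹ * Q z.2.2 z.2.1|)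
        = ((2:ℝ)^d)⁻¹ * ∑ y, ∑ z1, ∑ z2, |P y z1 z2 - ((2:ℝ)^m)⁻¹ * Q y z2| := by
      simp only [Fintype.sum_prod_type, habs]
      calc (∑ z1 : Fin m → Bool, ∑ z2 : Fin m → Bool, ∑ y : Fin d → Bool,
              ((2:ℝ)^d)⁻¹ * |P y z1 z2 - ((2:ℝ)^m)⁻¹ * Q y z2|)
          = ∑ y : Fin d → Bool, ∑ z1 : Fin m → Bool, ∑ z2 : Fin m → Bool,
              ((2:ℝ)^d)⁻¹ * |P y z1 z2 - ((2:ℝ)^m)⁻¹ * Q y z2| :=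
            (Finset.sum_congr rfl fun z1 _ => Finset.sum_comm).trans
              Finset.sum_comm
        _ = ((2:ℝ)^d)⁻¹ * ∑ y, ∑ z1, ∑ z2, |P y z1 z2 - ((2:ℝ)^m)⁻¹ * Q y z2| := by
            simp only [Finset.mul_sum]
    rw [hexp] at h
    set S := ∑ y, ∑ z1, ∑ z2, |P y z1 z2 - ((2:ℝ)^m)⁻¹ * Q y z2| with hSdef
    have h2d : (0:ℝ) < (2:ℝ)^d := by positivity
    have hΔS : ∑ y, Δ y = (1/2) * S := by
      simp only [hΔ, hSdef]; rw [Finset.mul_sum]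
    have hmul := mul_le_mul_of_nonneg_right h h2d.le
    have hid : 1/2 * (((2:ℝ)^d)⁻¹ * S) * 2^d = 1/2 * S := by
      field_simp
    rw [hΔS]; linarith
  -- Membership of good seeds in the target filter
  rw [ge_iff_le]
  refine le_trans ?_ (Nat.cast_le.mpr (Finset.card_le_card
    (show univ.filter (fun y : Fin d → Bool => Δ y ≤ ε ^ ((2:ℝ)/3)) ⊆ _ from ?_)))
  · -- cardinality bound via Markov over y
    set B := univ.filter (fun y : Fin d → Bool => ¬ (Δ y ≤ ε ^ ((2:ℝ)/3))) with hB
    have hBad : (B.card : ℝ) ≤ ε ^ ((1:ℝ)/3) * 2^d := by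
      have hstep1 : (B.card : ℝ) * ε ^ ((2:ℝ)/3) ≤ ∑ y ∈ B, Δ y := by
        have := Finset.card_nsmul_le_sum B Δ (ε ^ ((2:ℝ)/3))
          (fun y hy => (not_le.mp (Finset.mem_filter.mp hy).2).le)
        simpa [nsmul_eq_mul] using this
      have hstep2 : ∑ y ∈ B, Δ y ≤ ∑ y, Δ y :=
        Finset.sum_le_sum_of_subset_of_nonneg (Finset.subset_univ _) (fun y _ _ => hΔnn y)
      have hεd : ε * 2^d = (ε ^ ((1:ℝ)/3) * 2^d) * ε ^ ((2:ℝ)/3) := by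
        linear_combination (2:ℝ)^d * heq
      have hcomb : (B.card : ℝ) * ε ^ ((2:ℝ)/3) ≤ (ε ^ ((1:ℝ)/3) * 2^d) * ε ^ ((2:ℝ)/3) := by
        linarith
      exact le_of_mul_le_mul_right hcomb htpos
    have hcards : ((univ.filter (fun y : Fin d → Bool => Δ y ≤ ε ^ ((2:ℝ)/3))).card : ℝ)
        + (B.card : ℝ) = 2^d := by
      rw [← Nat.cast_add, hB, Finset.card_filter_add_card_filter_not,
        Finset.card_univ]
      simp [Fintype.card_fun]
    have hring : (1 - ε ^ ((1:ℝ)/3)) * (2:ℝ)^d = 2^d - ε ^ ((1:ℝ)/3) * 2^d := by ring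
    linarith
  · -- each good seed is in the filter
    intro y hy
    have hΔy : Δ y ≤ ε ^ ((2:ℝ)/3) := (Finset.mem_filter.mp hy).2
    rw [Finset.mem_filter]
    refine ⟨Finset.mem_univ _, ?_⟩
    rw [ge_iff_le]
    -- the set of good z'
    set T := univ.filter (fun z2 : Fin m → Bool =>
      (1/2) * ∑ z1, |P y z1 z2 - ((2:ℝ)^m)⁻¹ * Q y z2| ≤ ε ^ ((1:ℝ)/3) * Q y z2) with hT
    have hT1 : 1 - ε ^ ((1:ℝ)/3) ≤ ∑ z' ∈ T, Q y z' := by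
      have hsplitQ := Finset.sum_filter_add_sum_filter_not univ
        (fun z2 : Fin m → Bool =>
          (1/2) * ∑ z1, |P y z1 z2 - ((2:ℝ)^m)⁻¹ * Q y z2| ≤ ε ^ ((1:ℝ)/3) * Q y z2)
        (Q y)
      have hQ1 : ∑ z' : Fin m → Bool, Q y z' = 1 := by
        simp only [hQ]
        rw [Finset.sum_fiberwise univ (fun x => nm x (A y)) X]
        exact hXsum
      have hbadz : ∑ z' ∈ univ.filter (fun z2 : Fin m → Bool =>
          ¬ ((1/2) * ∑ z1, |P y z1 z2 - ((2:ℝ)^m)⁻¹ * Q y z2| ≤ ε ^ ((1:ℝ)/3) * Q y z2)),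
          Q y z' ≤ ε ^ ((1:ℝ)/3) := by
        set Bz := univ.filter (fun z2 : Fin m → Bool =>
          ¬ ((1/2) * ∑ z1, |P y z1 z2 - ((2:ℝ)^m)⁻¹ * Q y z2| ≤ ε ^ ((1:ℝ)/3) * Q y z2))
          with hBz
        have step1 : ε ^ ((1:ℝ)/3) * ∑ z' ∈ Bz, Q y z'
            ≤ ∑ z' ∈ Bz, (1/2) * ∑ z1, |P y z1 z' - ((2:ℝ)^m)⁻¹ * Q y z'| := by
          rw [Finset.mul_sum]
          refine Finset.sum_le_sum fun z2 hz2 => ?_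
          have h2 := (Finset.mem_filter.mp hz2).2
          push_neg at h2
          exact h2.le
        have step2 : ∑ z' ∈ Bz, (1/2) * ∑ z1, |P y z1 z' - ((2:ℝ)^m)⁻¹ * Q y z'|
            ≤ ∑ z' : Fin m → Bool, (1/2) * ∑ z1, |P y z1 z' - ((2:ℝ)^m)⁻¹ * Q y z'| :=
          Finset.sum_le_sum_of_subset_of_nonneg (Finset.subset_univ _)
            (fun z2 _ _ => by positivity)
        have step3 : ∑ z' : Fin m → Bool, (1/2) * ∑ z1, |P y z1 z' - ((2:ℝ)^m)⁻¹ * Q y z'|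
            = Δ y := by
          simp only [hΔ]
          rw [← Finset.mul_sum, Finset.sum_comm]
        have hfin : ε ^ ((1:ℝ)/3) * ∑ z' ∈ Bz, Q y z'
            ≤ ε ^ ((1:ℝ)/3) * ε ^ ((1:ℝ)/3) := by
          rw [← hte]; linarith
        exact le_of_mul_le_mul_left hfin he3pos
      linarith
    refine le_trans hT1 (Finset.sum_le_sum_of_subset_of_nonneg ?_
      (fun z2 _ _ => hQnn y z2))
    -- T is contained in the filter of the statement
    intro z2 hz2
    have hz2' := (Finset.mem_filter.mp hz2).2
    rw [Finset.mem_filter]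
    refine ⟨Finset.mem_univ _, fun _ => ((2:ℝ)^m)⁻¹, fun u => by positivity, ?_, ?_, ?_⟩
    · rw [Finset.sum_const, Finset.card_univ]
      have hcard : Fintype.card (Fin m → Bool) = 2^m := by
        simp [Fintype.card_fun]
      rw [hcard, nsmul_eq_mul, Nat.cast_pow, Nat.cast_ofNat]
      exact mul_inv_cancel₀ (by positivity)
    · intro u
      have hm : ((2:ℝ)^m)⁻¹ = (2:ℝ) ^ (-(m:ℝ)) := by
        rw [← Real.rpow_natCast 2 m, ← Real.rpow_neg (by norm_num)]
      rw [hm]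
      apply Real.rpow_le_rpow_of_exponent_le (by norm_num : (1:ℝ) ≤ 2)
      have hlog : 0 ≤ Real.logb 2 (1/ε) :=
        Real.logb_nonneg (by norm_num) (one_le_one_div hε h1.le)
      linarith
    · exact hz2'


end
end
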